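/- arXiv:2406.13402 — 5 statements merged into one kernel-verified Lean document; each statement's English description precedes it below -/
import Mathlib

section
/- For every hypergraph H, every non-negative integers t and ℓ, and every set S of t vertices of H, one has χ(H, t + ℓ) ≥ χ(H_S, ℓ). -/
namespace HypergraphColouring

variable {V : Type*}

/-- A colouring `f` of the vertices is `c`-strong for the hypergraph `H` if every edge `e`
contains vertices of at least `min c |e|` distinct colours. -/
def IsStrongColouring (H : Set (Finset V)) (c : ℕ) (f : V → ℕ) : Prop :=
  ∀ e ∈ H, min c e.card ≤ (e.image f).card

/-- The `c`-strong chromatic number of `H`: the smallest number of colours used by a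
`c`-strong colouring of `H` (`⊤` if there is none). -/
noncomputable def chromStrong (H : Set (Finset V)) (c : ℕ) : ℕ∞ :=
  sInf {n : ℕ∞ | ∃ k : ℕ, n = (k : ℕ∞) ∧
    ∃ f : V → ℕ, IsStrongColouring H c f ∧ ∀ v, f v < k}

/-- `H` is `t`-intersecting: every two (distinct) edges meet in at least `t` vertices. -/
def IsIntersecting [DecidableEq V] (H : Set (Finset V)) (t : ℕ) : Prop :=
  ∀ e ∈ H, ∀ f ∈ H, e ≠ f → t ≤ (e ∩ f).card

/-- The link of a set `S` of vertices: edges `e \ S` for `e ∈ H` with `S ⊆ e`. -/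
def link [DecidableEq V] (H : Set (Finset V)) (S : Finset V) : Set (Finset V) :=
  {e | ∃ f ∈ H, S ⊆ f ∧ e = f \ S}

/-- `χ(H, t, ℓ)`: the maximum of `1` and of `χ(H_S, ℓ)` over all sets `S` of `t` vertices. -/
noncomputable def chromLink [DecidableEq V] (H : Set (Finset V)) (t l : ℕ) : ℕ∞ :=
  max 1 (⨆ S ∈ {S : Finset V | S.card = t}, chromStrong (link H S) l)

/-- A collection of edges is a sunflower if every vertex lying in two of the edges lies
in all of them. -/
def IsSunflower (E : Finset (Finset V)) : Prop :=
  ∀ e ∈ E, ∀ f ∈ E, e ≠ f → ∀ v ∈ e, v ∈ f → ∀ g ∈ E, v ∈ g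

/-- `H` contains a sunflower with `p` petals whose kernel has size at most `k`. -/
def HasSunflower (H : Set (Finset V)) (p : ℕ) (k : ℤ) : Prop :=
  ∃ E : Finset (Finset V), ↑E ⊆ H ∧ E.card = p ∧ IsSunflower E ∧
    (((⋂ e ∈ E, (e : Set V)).ncard : ℤ) ≤ k)

/-- The regions formed by a sequence of edges: all nonempty sets of the form
`⋂_{i ∈ I} e i ∩ ⋂_{i ∉ I} (e i)ᶜ`. -/
def regions {L : ℕ} (e : Fin L → Finset V) : Set (Set V) :=
  {R | R.Nonempty ∧ ∃ I : Finset (Fin L),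
    R = (⋂ i ∈ I, (e i : Set V)) ∩ (⋂ i ∈ Iᶜ, ((e i : Set V)ᶜ))}

/-- A sequence of edges is `k`-split-degenerate if each edge meets at most `k` regions
formed by the preceding edges, and contains no such region. -/
def SplitDegenerate (k : ℕ) {m : ℕ} (e : Fin m → Finset V) : Prop :=
  ∀ j : Fin m,
    ({R ∈ regions (fun i : Fin j.val => e ⟨i.val, i.isLt.trans j.isLt⟩) |
        ((e j : Set V) ∩ R).Nonempty}).ncard ≤ k ∧
    ∀ R ∈ regions (fun i : Fin j.val => e ⟨i.val, i.isLt.trans j.isLt⟩),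
      ¬ R ⊆ (e j : Set V)

/-- `(C, P)` witnesses that the sequence of edges `e` is a `b`-bromeliad. -/
def IsBromeliadWitness [DecidableEq V] {b : ℕ} (e C P : Fin b → Finset V) : Prop :=
  (∀ i, Disjoint (C i) (P i) ∧ C i ∪ P i = e i) ∧
  (∀ i : Fin b, i.val = 0 → e i = C i) ∧
  (∀ i j : Fin b, i < j → C j ⊂ C i) ∧
  (∀ i, (C i).Nonempty) ∧
  (∀ i j : Fin b, i ≠ j → Disjoint (P i) (P j)) ∧
  (∀ i j : Fin b, j.val = 0 → Disjoint (P i) (C j))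

/-- The sequence of edges `e` is a `b`-bromeliad. -/
def IsBromeliad [DecidableEq V] {b : ℕ} (e : Fin b → Finset V) : Prop :=
  ∃ C P : Fin b → Finset V, IsBromeliadWitness e C P


theorem stmt2 (V : Type u) [DecidableEq V] (H : Set (Finset V)) (t ℓ : ℕ)
    (S : Finset V) (hS : S.card = t) :
    chromStrong (link H S) ℓ ≤ chromStrong H (t + ℓ) := by
  apply sInf_le_sInf
  rintro n ⟨k, rfl, φ, hφ, hlt⟩
  refine ⟨k, rfl, φ, ?_, hlt⟩
  rintro e ⟨f, hf, hSf, rfl⟩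
  have hcard : f.card = (f \ S).card + t := by
    have ht : t ≤ f.card := hS ▸ Finset.card_le_card hSf
    rw [Finset.card_sdiff_of_subset hSf, hS]
    omega
  have h1 := hφ f hf
  have h2 : (f.image φ).card ≤ ((f \ S).image φ).card + t := by
    have : f.image φ ⊆ (f \ S).image φ ∪ S.image φ := by
      intro x hx
      simp only [Finset.mem_image, Finset.mem_union] at *
      obtain ⟨v, hv, rfl⟩ := hx
      by_cases hvS : v ∈ S
      · exact Or.inr ⟨v, hvS, rfl⟩
      · exact Or.inl ⟨v, Finset.mem_sdiff.mpr ⟨hv, hvS⟩, rfl⟩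
    calc (f.image φ).card ≤ ((f \ S).image φ ∪ S.image φ).card := Finset.card_le_card this
      _ ≤ ((f \ S).image φ).card + (S.image φ).card := Finset.card_union_le _ _
      _ ≤ ((f \ S).image φ).card + t := by
          have := Finset.card_image_le (s := S) (f := φ)
          omega
  rw [hcard] at h1
  omega

end HypergraphColouring
end

section
/- For every positive integer t ≥ 1 and every n, there exists a hypergraph H such that: H contains no sunflower with 2 petals and kernel of size at most t − 2; for every set S of t vertices the link H_S has no two edges intersecting (indeed, the edges of each link are pairwise disjoint, so χ(H_S, 1) = 1); and χ(H, t + 1) ≥ n. Concretely, if G is a graph with chromatic number at least n and T is a set of t − 1 new vertices, then the (t + 1)-uniform hypergraph H with edges {T ∪ e : e ∈ E(G)} has these properties, and χ(H, t + 1) ≥ χ(G). -/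
namespace HypergraphColouring

variable {V : Type*}

lemma main_aux (t : ℕ) (ht : 1 ≤ t) (W : Type) [DecidableEq W] (G : SimpleGraph W)
    (H : Set (Finset (W ⊕ Fin (t - 1))))
    (hH : H = {s | ∃ u v, G.Adj u v ∧
        s = {Sum.inl u, Sum.inl v} ∪ Finset.univ.image Sum.inr}) :
      (∀ s ∈ H, s.card = t + 1) ∧
      ¬ HasSunflower H 2 ((t : ℤ) - 2) ∧
      (∀ S : Finset (W ⊕ Fin (t - 1)), S.card = t →
        (link H S).Pairwise Disjoint ∧ chromStrong (link H S) 1 = 1) ∧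
      G.chromaticNumber ≤ chromStrong H (t + 1) := by
  classical
  set T : Finset (W ⊕ Fin (t - 1)) := Finset.univ.image Sum.inr with hT
  have hTcard : T.card = t - 1 := by
    rw [hT, Finset.card_image_of_injective _ Sum.inr_injective, Finset.card_univ,
      Fintype.card_fin]
  have hTsub : ∀ s ∈ H, T ⊆ s := by
    rintro s hs
    rw [hH] at hs
    obtain ⟨u, v, _, rfl⟩ := hs
    exact Finset.subset_union_right
  have hcard : ∀ s ∈ H, s.card = t + 1 := by
    rintro s hs
    rw [hH] at hs
    obtain ⟨u, v, huv, rfl⟩ := hs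
    have hdisj : Disjoint ({Sum.inl u, Sum.inl v} : Finset (W ⊕ Fin (t-1))) T := by
      rw [hT, Finset.disjoint_right]
      rintro x hx h2
      simp only [Finset.mem_image, Finset.mem_univ, true_and] at hx
      obtain ⟨i, rfl⟩ := hx
      simp at h2
    rw [Finset.card_union_of_disjoint hdisj, hTcard]
    have : ({Sum.inl u, Sum.inl v} : Finset (W ⊕ Fin (t-1))).card = 2 := by
      rw [Finset.card_insert_of_notMem (by simp [huv.ne]), Finset.card_singleton]
    rw [this]
    omega
  refine ⟨hcard, ?_, ?_, ?_⟩
  · -- no sunflower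
    rintro ⟨E, hEH, hE2, _, hker⟩
    obtain ⟨e, he⟩ : E.Nonempty := Finset.card_pos.mp (by omega)
    have hsub : (T : Set (W ⊕ Fin (t-1))) ⊆ ⋂ e ∈ E, (e : Set (W ⊕ Fin (t-1))) := by
      refine Set.subset_iInter₂ fun f hf => ?_
      exact_mod_cast Finset.coe_subset.mpr (hTsub f (hEH hf))
    have hfin : (⋂ e ∈ E, (e : Set (W ⊕ Fin (t-1)))).Finite :=
      (e.finite_toSet).subset (Set.biInter_subset_of_mem he)
    have := Set.ncard_le_ncard hsub hfin
    rw [Set.ncard_coe_finset, hTcard] at this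
    have h1 : ((t - 1 : ℕ) : ℤ) ≤ ((⋂ e ∈ E, (e : Set (W ⊕ Fin (t-1)))).ncard : ℤ) := by
      exact_mod_cast this
    omega
  · -- link
    intro S hS
    have hlink1 : ∀ e ∈ link H S, e.card = 1 := by
      rintro e ⟨f, hf, hSf, rfl⟩
      rw [Finset.card_sdiff_of_subset hSf, hcard f hf, hS]
      omega
    have hV : Nonempty (W ⊕ Fin (t-1)) := by
      obtain ⟨v, hv⟩ : S.Nonempty := Finset.card_pos.mp (by omega)
      exact ⟨v⟩
    constructor
    · intro e he f hf hef
      obtain ⟨a, rfl⟩ := Finset.card_eq_one.mp (hlink1 e he)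
      obtain ⟨b, rfl⟩ := Finset.card_eq_one.mp (hlink1 f hf)
      simp only [Finset.disjoint_singleton]
      exact fun h => hef (by rw [h])
    · refine le_antisymm ?_ ?_
      · apply sInf_le
        refine ⟨1, rfl, fun _ => 0, ?_, fun _ => Nat.zero_lt_one⟩
        intro e he
        have h1 := hlink1 e he
        obtain ⟨a, rfl⟩ := Finset.card_eq_one.mp h1
        simp
      · refine le_sInf ?_
        rintro x ⟨k, rfl, f, _, hf⟩
        have : k ≠ 0 := by
          rintro rfl
          exact Nat.not_lt_zero _ (hf hV.some)
        exact_mod_cast Nat.one_le_iff_ne_zero.mpr this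
  · -- chromatic number
    refine le_sInf ?_
    rintro x ⟨k, rfl, f, hstrong, hf⟩
    have hcol : G.Colorable k := by
      refine ⟨SimpleGraph.Coloring.mk (fun w => ⟨f (Sum.inl w), hf _⟩) ?_⟩
      intro u v huv hcont
      have hedge : ({Sum.inl u, Sum.inl v} ∪ T : Finset (W ⊕ Fin (t-1))) ∈ H := by
        rw [hH]; exact ⟨u, v, huv, rfl⟩
      have h1 := hstrong _ hedge
      rw [hcard _ hedge, min_self] at h1
      have heq : f (Sum.inl u) = f (Sum.inl v) := by
        simpa [Fin.ext_iff] using hcont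
      have : (({Sum.inl u, Sum.inl v} ∪ T).image f).card ≤ t := by
        calc (({Sum.inl u, Sum.inl v} ∪ T).image f).card
            ≤ (({Sum.inl u, Sum.inl v} : Finset _).image f).card + (T.image f).card := by
              rw [Finset.image_union]; exact Finset.card_union_le _ _
          _ ≤ 1 + (t - 1) := by
              gcongr
              · have : ({Sum.inl u, Sum.inl v} : Finset (W ⊕ Fin (t-1))).image f
                    = {f (Sum.inl u)} := by
                  rw [Finset.image_insert, Finset.image_singleton, heq]; simp
                rw [this, Finset.card_singleton]
              · exact le_trans (Finset.card_image_le) (le_of_eq hTcard)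
          _ = t := by omega
      omega
    exact hcol.chromaticNumber_le

theorem stmt4 (t n : ℕ) (ht : 1 ≤ t) :
    (∃ (V : Type) (_ : DecidableEq V) (H : Set (Finset V)),
      ¬ HasSunflower H 2 ((t : ℤ) - 2) ∧
      (∀ S : Finset V, S.card = t →
        (link H S).Pairwise Disjoint ∧ chromStrong (link H S) 1 = 1) ∧
      (n : ℕ∞) ≤ chromStrong H (t + 1)) ∧
    (∀ (W : Type) (_ : DecidableEq W) (G : SimpleGraph W)
        (H : Set (Finset (W ⊕ Fin (t - 1)))),
      H = {s | ∃ u v, G.Adj u v ∧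
            s = {Sum.inl u, Sum.inl v} ∪ Finset.univ.image Sum.inr} →
      (∀ s ∈ H, s.card = t + 1) ∧
      ¬ HasSunflower H 2 ((t : ℤ) - 2) ∧
      (∀ S : Finset (W ⊕ Fin (t - 1)), S.card = t →
        (link H S).Pairwise Disjoint ∧ chromStrong (link H S) 1 = 1) ∧
      G.chromaticNumber ≤ chromStrong H (t + 1)) := by
  constructor
  · refine ⟨Fin n ⊕ Fin (t - 1), inferInstance,
      {s | ∃ u v, (⊤ : SimpleGraph (Fin n)).Adj u v ∧
        s = {Sum.inl u, Sum.inl v} ∪ Finset.univ.image Sum.inr}, ?_, ?_, ?_⟩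
    · exact (main_aux t ht (Fin n) ⊤ _ rfl).2.1
    · exact (main_aux t ht (Fin n) ⊤ _ rfl).2.2.1
    · have h := (main_aux t ht (Fin n) ⊤ _ rfl).2.2.2
      rwa [SimpleGraph.chromaticNumber_top, Fintype.card_fin] at h
  · intro W _ G H hH
    exact main_aux t ht W G H hH

end HypergraphColouring
end

section
/- For all positive integers b and r with b ≥ 2 there is an integer K (one may take K = b(r−1)^{b−1} + 1) such that the following holds. Let H be a hypergraph with χ(H, b − 1) ≥ K, and let B = (e_1, …, e_b) be a b-bromeliad in H. Then there is a sub-hypergraph H′ of H and an index j with 2 ≤ j ≤ b such that χ(H′, b − 1) ≥ r and every edge of H′ is disjoint from the petal P_j of e_j in B. -/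
namespace HypergraphColouring

variable {V : Type*}

lemma sum_split (B m : ℕ) (d : Fin (m+1) → ℕ) :
    ∑ i, d i * B ^ i.val = d 0 + B * ∑ i : Fin m, d i.succ * B ^ i.val := by
  rw [Fin.sum_univ_succ, Finset.mul_sum]
  simp only [Fin.val_succ, Fin.val_zero, pow_zero, mul_one, pow_succ]
  congr 1
  apply Finset.sum_congr rfl
  intro i _
  ring

lemma digits_lt (B : ℕ) : ∀ (m : ℕ) (d : Fin m → ℕ), (∀ i, d i < B) →
    ∑ i, d i * B ^ i.val < B ^ m := by
  intro m
  induction m with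
  | zero => intro d hd; simp
  | succ m ih =>
    intro d hd
    rw [sum_split]
    have hS := ih (fun i => d i.succ) (fun i => hd i.succ)
    calc d 0 + B * ∑ i : Fin m, d i.succ * B ^ i.val
        < B + B * ∑ i : Fin m, d i.succ * B ^ i.val := by
          exact Nat.add_lt_add_right (hd 0) _
      _ = B * ((∑ i : Fin m, d i.succ * B ^ i.val) + 1) := by ring
      _ ≤ B * B ^ m := Nat.mul_le_mul_left _ hS
      _ = B ^ (m+1) := by ring

lemma digits_inj (B : ℕ) : ∀ (m : ℕ) (d d' : Fin m → ℕ), (∀ i, d i < B) → (∀ i, d' i < B) →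
    (∑ i, d i * B ^ i.val = ∑ i, d' i * B ^ i.val) → ∀ i, d i = d' i := by
  intro m
  induction m with
  | zero => intro _ _ _ _ _ i; exact i.elim0
  | succ m ih =>
    intro d d' hd hd' hsum
    rw [sum_split, sum_split] at hsum
    have hB : 0 < B := lt_of_le_of_lt (Nat.zero_le _) (hd 0)
    have h0 : d 0 = d' 0 := by
      have h1 : (d 0 + B * ∑ i : Fin m, d i.succ * B ^ i.val) % B = d 0 := by
        rw [Nat.add_mul_mod_self_left, Nat.mod_eq_of_lt (hd 0)]
      have h2 : (d' 0 + B * ∑ i : Fin m, d' i.succ * B ^ i.val) % B = d' 0 := by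
        rw [Nat.add_mul_mod_self_left, Nat.mod_eq_of_lt (hd' 0)]
      rw [← h1, ← h2, hsum]
    rw [h0] at hsum
    have h3 := Nat.eq_of_mul_eq_mul_left hB (Nat.add_left_cancel hsum)
    intro i
    refine Fin.cases h0 (fun j => ?_) i
    exact ih (fun i => d i.succ) (fun i => d' i.succ) (fun i => hd i.succ)
      (fun i => hd' i.succ) h3 j

lemma card_image_le_of_refines {α : Type*} [DecidableEq α] (s : Finset α) (f g : α → ℕ)
    (h : ∀ v ∈ s, ∀ w ∈ s, f v = f w → g v = g w) :
    (s.image g).card ≤ (s.image f).card := by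
  classical
  apply Finset.card_le_card_of_surjOn
    (fun n => if hn : ∃ v ∈ s, f v = n then g hn.choose else 0)
  intro m hm
  rcases Finset.mem_image.mp (Finset.mem_coe.mp hm) with ⟨w, hws, rfl⟩
  refine ⟨f w, Finset.mem_coe.mpr (Finset.mem_image_of_mem f hws), ?_⟩
  have hex : ∃ v ∈ s, f v = f w := ⟨w, hws, rfl⟩
  simp only [dif_pos hex]
  obtain ⟨hv, hfv⟩ := hex.choose_spec
  exact h _ hv _ hws hfv

theorem stmt11 (b r : ℕ) (hb : 2 ≤ b) (hr : 0 < r)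
    (V : Type u) [DecidableEq V] (H : Set (Finset V)) (e C P : Fin b → Finset V)
    (hchrom : ((b * (r - 1) ^ (b - 1) + 1 : ℕ) : ℕ∞) ≤ chromStrong H (b - 1))
    (heH : ∀ i, e i ∈ H) (hB : IsBromeliadWitness e C P) :
    ∃ (H' : Set (Finset V)) (j : Fin b), H' ⊆ H ∧ 0 < j.val ∧
      (r : ℕ∞) ≤ chromStrong H' (b - 1) ∧ ∀ e' ∈ H', Disjoint e' (P j) := by
  classical
  obtain ⟨hCP, he0, hCchain, hCne, hPdisj, hPC0⟩ := hB
  obtain ⟨v0, hv0⟩ := hCne ⟨0, by omega⟩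
  by_cases hr1 : r = 1
  · refine ⟨∅, ⟨1, by omega⟩, by simp, by simp, ?_, by simp⟩
    subst hr1
    show (Nat.cast 1 : ℕ∞) ≤ chromStrong ∅ (b-1)
    apply le_sInf
    rintro n ⟨k, rfl, f, -, hf⟩
    have := hf v0
    exact_mod_cast by omega
  · have hr2 : 2 ≤ r := by omega
    by_contra hcon
    push_neg at hcon
    set B := r - 1 with hBdef
    have hBpos : 0 < B := by omega
    have key : ∀ i : Fin (b-1), ∃ (k : ℕ) (f : V → ℕ), k < r ∧
        IsStrongColouring {e' ∈ H | Disjoint e' (P ⟨i.val+1, by have := i.isLt; omega⟩)}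
          (b-1) f ∧ ∀ v, f v < k := by
      intro i
      set jj : Fin b := ⟨i.val+1, by have := i.isLt; omega⟩ with hjj
      set H' : Set (Finset V) := {e' ∈ H | Disjoint e' (P jj)} with hH'
      have hsub : H' ⊆ H := fun x hx => hx.1
      have hnle : ¬ ((r:ℕ∞) ≤ chromStrong H' (b-1)) := by
        intro hle
        obtain ⟨e', he', hnd⟩ := hcon H' jj hsub (by simp [hjj]) hle
        exact hnd he'.2
      have hlt' : chromStrong H' (b-1) < (r:ℕ∞) := lt_of_not_ge hnle
      rw [chromStrong] at hlt'
      obtain ⟨n, hn, hnr⟩ := sInf_lt_iff.mp hlt'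
      obtain ⟨k, rfl, f, hf1, hf2⟩ := hn
      exact ⟨k, f, by exact_mod_cast hnr, hf1, hf2⟩
    choose k g hk hstrong hlt using key
    have hglt : ∀ i v, g i v < B := fun i v => lt_of_lt_of_le (hlt i v) (by have := hk i; omega)
    set F : V → ℕ := fun v => ∑ i : Fin (b-1), g i v * B ^ i.val with hF
    set p : V → ℕ := fun v => if h : ∃ i : Fin b, v ∈ P i then h.choose.val else 0 with hp
    set f : V → ℕ := fun v => p v + b * F v with hf
    have hpb : ∀ v, p v < b := by
      intro v
      simp only [hp]
      split
      · exact Fin.isLt _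
      · omega
    have hpP : ∀ (j : Fin b) (v : V), v ∈ P j → p v = j.val := by
      intro j v hv
      have hex : ∃ i : Fin b, v ∈ P i := ⟨j, hv⟩
      simp only [hp]
      rw [dif_pos hex]
      by_contra hne
      have hij : hex.choose ≠ j := fun h => hne (congrArg Fin.val h)
      exact Finset.disjoint_left.mp (hPdisj _ _ hij) hex.choose_spec hv
    have hfmod : ∀ v, f v % b = p v := by
      intro v
      simp only [hf]
      rw [Nat.add_mul_mod_self_left, Nat.mod_eq_of_lt (hpb v)]
    have hrefine : ∀ (i : Fin (b-1)) (v w : V), f v = f w → g i v = g i w := by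
      intro i v w hvw
      have h1 : p v = p w := by rw [← hfmod v, ← hfmod w, hvw]
      have h2 : b * F v = b * F w := by
        have h3 : p v + b * F v = p w + b * F w := hvw
        rw [h1] at h3
        exact Nat.add_left_cancel h3
      have hFeq : F v = F w := Nat.eq_of_mul_eq_mul_left (by omega) h2
      exact digits_inj B (b-1) (fun i => g i v) (fun i => g i w)
        (fun i => hglt i v) (fun i => hglt i w) hFeq i
    have hstrongH : IsStrongColouring H (b-1) f := by
      intro e' he'
      by_cases hcase : ∃ i : Fin (b-1), Disjoint e' (P ⟨i.val+1, by have := i.isLt; omega⟩)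
      · obtain ⟨i, hdis⟩ := hcase
        have h1 := hstrong i e' ⟨he', hdis⟩
        exact h1.trans (card_image_le_of_refines e' f (g i) (fun v _ w _ h => hrefine i v w h))
      · push_neg at hcase
        have hpick : ∀ i : Fin (b-1),
            ∃ v, v ∈ e' ∧ v ∈ P ⟨i.val+1, by have := i.isLt; omega⟩ := by
          intro i
          exact Finset.not_disjoint_iff.mp (hcase i)
        choose w hw1 hw2 using hpick
        have hinj : Set.InjOn (fun i : Fin (b-1) => f (w i))
            ↑(Finset.univ : Finset (Fin (b-1))) := by
          intro i _ i' _ hii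
          have hpp : p (w i) = p (w i') := by
            rw [← hfmod, ← hfmod]
            exact congrArg (· % b) hii
          have h1 : p (w i) = i.val + 1 := hpP _ _ (hw2 i)
          have h2 : p (w i') = i'.val + 1 := hpP _ _ (hw2 i')
          rw [h1, h2] at hpp
          exact Fin.ext (by omega)
        have hmaps : ∀ i : Fin (b-1), i ∈ Finset.univ → f (w i) ∈ e'.image f :=
          fun i _ => Finset.mem_image_of_mem f (hw1 i)
        have hcard := Finset.card_le_card_of_injOn _ hmaps hinj
        simp only [Finset.card_univ, Fintype.card_fin] at hcard
        exact le_trans (min_le_left _ _) hcard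
    have hbound : ∀ v, f v < b * B ^ (b-1) := by
      intro v
      have hFv : F v < B ^ (b-1) := digits_lt B (b-1) (fun i => g i v) (fun i => hglt i v)
      calc f v = p v + b * F v := rfl
        _ < b + b * F v := Nat.add_lt_add_right (hpb v) _
        _ = b * (F v + 1) := by ring
        _ ≤ b * B ^ (b-1) := Nat.mul_le_mul_left _ hFv
    have hmem : ((b * B ^ (b-1) : ℕ) : ℕ∞) ∈ {n : ℕ∞ | ∃ k : ℕ, n = (k:ℕ∞) ∧
        ∃ f : V → ℕ, IsStrongColouring H (b-1) f ∧ ∀ v, f v < k} :=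
      ⟨_, rfl, f, hstrongH, hbound⟩
    have hle : chromStrong H (b-1) ≤ ((b * B ^ (b-1) : ℕ) : ℕ∞) := sInf_le hmem
    have hfin : ((b * B^(b-1) + 1 : ℕ) : ℕ∞) ≤ ((b * B^(b-1) : ℕ) : ℕ∞) :=
      le_trans hchrom hle
    have : b * B^(b-1) + 1 ≤ b * B^(b-1) := by exact_mod_cast hfin
    omega

end HypergraphColouring
end

section
/- Let c ≥ 2 be an integer, let H be a hypergraph, and let S be a set of c − 2 vertices such that every edge of H contains S and χ(H_S, 2) ≥ 2. Then χ(H, c) ≥ χ(H_S, 2) + c − 2. -/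
namespace HypergraphColouring

variable {V : Type*}

lemma relabel_strictMulOn (L : Finset ℕ) :
    Set.InjOn (fun x => (L.filter (fun y => y < x)).card) L := by
  have key : ∀ x ∈ L, ∀ y ∈ L, x < y →
      (L.filter (fun z => z < x)).card < (L.filter (fun z => z < y)).card := by
    intro x hx y _ hxy
    refine Finset.card_lt_card ?_
    refine (Finset.ssubset_iff_of_subset ?_).2 ⟨x, ?_, by simp⟩
    · intro z hz
      simp only [Finset.mem_filter] at hz ⊢
      exact ⟨hz.1, hz.2.trans hxy⟩
    · simp [Finset.mem_filter, hx, hxy]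
  intro x hx y hy hxy
  by_contra hne
  rcases Nat.lt_or_ge x y with h | h
  · exact absurd hxy (Nat.ne_of_lt (key x hx y hy h))
  · exact absurd hxy.symm (Nat.ne_of_lt (key y hy x hx (lt_of_le_of_ne h (Ne.symm hne))))

theorem stmt13 (c : ℕ) (hc : 2 ≤ c) (V : Type u) [DecidableEq V]
    (H : Set (Finset V)) (S : Finset V) (hS : S.card = c - 2)
    (hsub : ∀ e ∈ H, S ⊆ e) (h2 : (2 : ℕ∞) ≤ chromStrong (link H S) 2) :
    chromStrong (link H S) 2 + ((c - 2 : ℕ) : ℕ∞) ≤ chromStrong H c := by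
  -- there is a link edge of size ≥ 2
  obtain ⟨e0, he0, he0card⟩ : ∃ e0 ∈ link H S, 2 ≤ e0.card := by
    by_contra h
    push_neg at h
    have hmem : (1 : ℕ∞) ∈ {n : ℕ∞ | ∃ k : ℕ, n = (k : ℕ∞) ∧
        ∃ f : V → ℕ, IsStrongColouring (link H S) 2 f ∧ ∀ v, f v < k} := by
      refine ⟨1, by norm_num, fun _ => 0, ?_, fun v => one_pos⟩
      intro e he
      have hcard := h e he
      rcases e.eq_empty_or_nonempty with rfl | hne
      · simp
      · have h1 : (e.image (fun _ => 0)).card = 1 := by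
          rw [Finset.image_const hne]; simp
        omega
    have hle := sInf_le hmem
    have := le_trans h2 hle
    norm_num at this
  refine le_sInf ?_
  rintro n ⟨k, rfl, f, hf, hfk⟩
  obtain ⟨e1, he1H, hSe1, he0eq⟩ := he0
  -- c ≤ k
  have himrange : ∀ e : Finset V, e.image f ⊆ Finset.range k := by
    intro e x hx
    obtain ⟨v, _, rfl⟩ := Finset.mem_image.1 hx
    exact Finset.mem_range.2 (hfk v)
  have hcard_split : ∀ e : Finset V, S ⊆ e → e.card = (e \ S).card + (c - 2) := by
    intro e hSe
    rw [Finset.card_sdiff_of_subset hSe, hS]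
    have := Finset.card_le_card hSe
    omega
  have hck : c ≤ k := by
    have h1 : min c e1.card ≤ (e1.image f).card := hf e1 he1H
    have h2' : (e1.image f).card ≤ k := by
      simpa using Finset.card_le_card (himrange e1)
    have h3 := hcard_split e1 hSe1
    rw [← he0eq] at h3
    omega
  -- construct T'
  have hTrange : S.image f ⊆ Finset.range k := himrange S
  have hTcard : (S.image f).card ≤ c - 2 := hS ▸ Finset.card_image_le
  obtain ⟨T', hTT', hT'range, hT'card⟩ :=
    Finset.exists_subsuperset_card_eq hTrange hTcard (by simp; omega)
  set L : Finset ℕ := Finset.range k \ T' with hL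
  have hLcard : L.card = k - (c - 2) := by
    rw [hL, Finset.card_sdiff_of_subset hT'range, hT'card, Finset.card_range]
  have hLne : L.Nonempty := by
    rw [← Finset.card_pos, hLcard]; omega
  obtain ⟨a, haL⟩ := hLne
  set g : V → ℕ := fun v => if f v ∈ T' then a else f v with hg
  have hgL : ∀ v, g v ∈ L := by
    intro v
    rw [hg]
    by_cases hv : f v ∈ T'
    · simpa [hv] using haL
    · simp only [hv, if_false]
      exact Finset.mem_sdiff.2 ⟨Finset.mem_range.2 (hfk v), hv⟩
  set r : ℕ → ℕ := fun x => (L.filter (fun y => y < x)).card with hr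
  have hrlt : ∀ v, r (g v) < L.card := by
    intro v
    have hsub' : L.filter (fun y => y < g v) ⊆ L.erase (g v) := by
      intro z hz
      simp only [Finset.mem_filter] at hz
      exact Finset.mem_erase.2 ⟨Nat.ne_of_lt hz.2, hz.1⟩
    have := Finset.card_le_card hsub'
    rw [Finset.card_erase_of_mem (hgL v)] at this
    have hpos : 0 < L.card := Finset.card_pos.2 ⟨g v, hgL v⟩
    have heq : r (g v) = (L.filter (fun y => y < g v)).card := rfl
    omega
  -- the colouring r ∘ g is 2-strong for the link
  have hstrong : IsStrongColouring (link H S) 2 (fun v => r (g v)) := by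
    rintro e' ⟨e, heH, hSe, rfl⟩
    have himg : (e \ S).image (fun v => r (g v)) = ((e \ S).image g).image r := by
      rw [Finset.image_image]; rfl
    have hinj : Set.InjOn r ((e \ S).image g : Finset ℕ) := by
      refine (relabel_strictMulOn L).mono ?_
      intro x hx
      simp only [Finset.coe_image, Set.mem_image] at hx
      obtain ⟨v, _, rfl⟩ := hx
      exact hgL v
    have hcardeq : ((e \ S).image (fun v => r (g v))).card = ((e \ S).image g).card := by
      rw [himg, Finset.card_image_of_injOn hinj]
    rw [hcardeq]
    set A : Finset ℕ := (e \ S).image f with hA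
    have h1 : e.image f ⊆ A ∪ T' := by
      intro x hx
      obtain ⟨v, hv, rfl⟩ := Finset.mem_image.1 hx
      by_cases hvS : v ∈ S
      · exact Finset.mem_union_right _ (hTT' (Finset.mem_image_of_mem f hvS))
      · exact Finset.mem_union_left _
          (Finset.mem_image_of_mem f (Finset.mem_sdiff.2 ⟨hv, hvS⟩))
    have h2' : (A ∪ T').card + (A ∩ T').card = A.card + T'.card :=
      Finset.card_union_add_card_inter A T'
    have h3 : A \ T' ⊆ (e \ S).image g := by
      intro x hx
      obtain ⟨hxA, hxT'⟩ := Finset.mem_sdiff.1 hx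
      obtain ⟨v, hv, rfl⟩ := Finset.mem_image.1 hxA
      refine Finset.mem_image.2 ⟨v, hv, ?_⟩
      rw [hg]; simp [hxT']
    have h4 : (A \ T').card + (A ∩ T').card = A.card :=
      Finset.card_sdiff_add_card_inter A T'
    have h5 : min c e.card ≤ (e.image f).card := hf e heH
    have h6 := hcard_split e hSe
    have h7 : (e.image f).card ≤ (A ∪ T').card := Finset.card_le_card h1
    have h8 : (A \ T').card ≤ ((e \ S).image g).card := Finset.card_le_card h3
    omega
  have hle : chromStrong (link H S) 2 ≤ ((k - (c - 2) : ℕ) : ℕ∞) := by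
    refine sInf_le ⟨k - (c - 2), rfl, fun v => r (g v), hstrong, fun v => ?_⟩
    rw [← hLcard]; exact hrlt v
  calc chromStrong (link H S) 2 + ((c - 2 : ℕ) : ℕ∞)
      ≤ ((k - (c - 2) : ℕ) : ℕ∞) + ((c - 2 : ℕ) : ℕ∞) := add_le_add_left hle _
    _ = (k : ℕ∞) := by rw [← Nat.cast_add]; congr 1; omega

end HypergraphColouring
end

section
/- Given positive integers t, ℓ, K with K ≥ 2 and ℓ ≥ 2, there exists a hypergraph H with the following properties: H is t-intersecting; χ(H, t + ℓ) = K^{binom(t + 2ℓ − 4, ℓ − 2)} + t + 2ℓ − 4; and χ(H, t, ℓ) ≤ K^{binom(2ℓ − 4, ℓ − 2)} + 2ℓ − 4. -/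
namespace HypergraphColouring

variable {V : Type*}

section Construction

open Finset

private def rk {α : Type*} [LinearOrder α] (X : Finset α) (w : α) : ℕ :=
  if h : w ∈ X then ((X.orderIsoOfFin rfl).symm ⟨w, h⟩ : Fin X.card).val else 0

private lemma rk_lt {α : Type*} [LinearOrder α] {X : Finset α} {w : α} (h : w ∈ X) :
    rk X w < X.card := by
  rw [rk, dif_pos h]
  exact ((X.orderIsoOfFin rfl).symm ⟨w, h⟩).isLt

private lemma rk_injOn {α : Type*} [LinearOrder α] (X : Finset α) :
    Set.InjOn (rk X) ↑X := by
  intro x hx y hy hxy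
  rw [Finset.mem_coe] at hx hy
  rw [rk, dif_pos hx, rk, dif_pos hy] at hxy
  have h2 := (X.orderIsoOfFin rfl).symm.injective (Fin.val_injective hxy)
  exact congrArg Subtype.val h2

variable (t ℓ K : ℕ)

private abbrev Idx : Finset (Finset (Fin (t + 2 * ℓ - 4))) :=
  Finset.univ.powersetCard (ℓ - 2)

private abbrev AF : Type := ↥(Idx t ℓ) → Fin K

private abbrev VT : Type := Fin (t + 2 * ℓ - 4) ⊕ AF t ℓ K

private def edg (U : ↥(Idx t ℓ)) (a a' : AF t ℓ K) : Finset (VT t ℓ K) :=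
  ((U : Finset (Fin (t + 2 * ℓ - 4)))ᶜ.image Sum.inl) ∪ {Sum.inr a, Sum.inr a'}

private def HC : Set (Finset (VT t ℓ K)) :=
  {e | ∃ (U : ↥(Idx t ℓ)) (a a' : AF t ℓ K), a U ≠ a' U ∧ e = edg t ℓ K U a a'}

variable {t ℓ K}

private lemma mem_edg_inl {U : ↥(Idx t ℓ)} {a a' : AF t ℓ K} {w : Fin (t + 2 * ℓ - 4)} :
    Sum.inl w ∈ edg t ℓ K U a a' ↔ w ∉ (U : Finset (Fin (t + 2 * ℓ - 4))) := by
  simp [edg]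

private lemma mem_edg_inr {U : ↥(Idx t ℓ)} {a a' b : AF t ℓ K} :
    Sum.inr b ∈ edg t ℓ K U a a' ↔ b = a ∨ b = a' := by
  simp [edg]

private lemma card_U (U : ↥(Idx t ℓ)) :
    (U : Finset (Fin (t + 2 * ℓ - 4))).card = ℓ - 2 :=
  Finset.mem_powersetCard_univ.mp U.2

private lemma card_edg (hl : 2 ≤ ℓ) {U : ↥(Idx t ℓ)} {a a' : AF t ℓ K} (h : a ≠ a') :
    (edg t ℓ K U a a').card = t + ℓ := by
  have hU := card_U U
  have hdisj : Disjoint (((U : Finset (Fin (t + 2 * ℓ - 4)))ᶜ).image Sum.inl)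
      ({Sum.inr a, Sum.inr a'} : Finset (VT t ℓ K)) := by
    rw [Finset.disjoint_left]
    rintro x hx h2
    obtain ⟨u, _, rfl⟩ := Finset.mem_image.mp hx
    simp at h2
  have hle : ℓ - 2 ≤ t + 2 * ℓ - 4 := by omega
  rw [edg, Finset.card_union_of_disjoint hdisj,
    Finset.card_image_of_injective _ Sum.inl_injective, Finset.card_compl,
    Finset.card_pair (fun he => h (Sum.inr.inj he)), Fintype.card_fin, hU]
  omega


private lemma HC_intersecting (hl : 2 ≤ ℓ) : IsIntersecting (HC t ℓ K) t := by
  rintro e ⟨U1, a1, a1', h1, rfl⟩ f ⟨U2, a2, a2', h2, rfl⟩ _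
  have hU1 := card_U U1
  have hU2 := card_U U2
  have hsub : (((U1 : Finset (Fin (t + 2 * ℓ - 4))) ∪ (U2 : Finset (Fin (t + 2 * ℓ - 4))))ᶜ).image Sum.inl
      ⊆ edg t ℓ K U1 a1 a1' ∩ edg t ℓ K U2 a2 a2' := by
    intro x hx
    obtain ⟨u, hu, rfl⟩ := Finset.mem_image.mp hx
    rw [Finset.compl_union] at hu
    obtain ⟨hu1, hu2⟩ := Finset.mem_inter.mp hu
    rw [Finset.mem_inter, mem_edg_inl, mem_edg_inl]
    exact ⟨Finset.mem_compl.mp hu1, Finset.mem_compl.mp hu2⟩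
  have hcard : t ≤ ((((U1 : Finset (Fin (t + 2 * ℓ - 4))) ∪ (U2 : Finset (Fin (t + 2 * ℓ - 4))))ᶜ)).card := by
    rw [Finset.card_compl, Fintype.card_fin]
    have := Finset.card_union_le (U1 : Finset (Fin (t + 2 * ℓ - 4))) (U2 : Finset (Fin (t + 2 * ℓ - 4)))
    omega
  calc t ≤ _ := hcard
    _ = ((((U1 : Finset (Fin (t + 2 * ℓ - 4))) ∪ (U2 : Finset (Fin (t + 2 * ℓ - 4))))ᶜ).image Sum.inl).card :=
        (Finset.card_image_of_injective _ Sum.inl_injective).symm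
    _ ≤ _ := Finset.card_le_card hsub

private lemma card_VT :
    Fintype.card (VT t ℓ K) = K ^ ((t + 2 * ℓ - 4).choose (ℓ - 2)) + (t + 2 * ℓ - 4) := by
  rw [Fintype.card_sum, Fintype.card_fin, Fintype.card_fun, Fintype.card_coe,
    Finset.card_powersetCard, Finset.card_univ, Fintype.card_fin, Fintype.card_fin]
  omega

private lemma exists_edge (ht : 0 < t) (hl : 2 ≤ ℓ) (hK : 2 ≤ K) {v v' : VT t ℓ K}
    (hne : v ≠ v') : ∃ e ∈ HC t ℓ K, v ∈ e ∧ v' ∈ e := by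
  have hx01 : (⟨0, by omega⟩ : Fin K) ≠ ⟨1, by omega⟩ := by
    intro h
    simpa using congrArg Fin.val h
  set x0 : Fin K := ⟨0, by omega⟩ with hx0
  set x1 : Fin K := ⟨1, by omega⟩ with hx1
  have flipne : ∀ y : Fin K, (if y = x0 then x1 else x0) ≠ y := by
    intro y
    by_cases h : y = x0
    · rw [if_pos h, h]; exact fun hh => hx01 hh.symm
    · rw [if_neg h]; exact fun hh => h hh.symm
  rcases v with w | a <;> rcases v' with w' | a'
  · -- inl inl
    by_cases hm : t + 2 * ℓ - 4 ≤ 1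
    · exfalso
      have h1 := w.isLt
      have h2 := w'.isLt
      exact hne (by rw [Fin.ext_iff.mpr (show w.val = w'.val by omega)])
    · have hww' : w ≠ w' := fun h => hne (by rw [h])
      have hcc : ℓ - 2 ≤ (({w, w'} : Finset (Fin (t + 2 * ℓ - 4)))ᶜ).card := by
        rw [Finset.card_compl, Finset.card_pair hww', Fintype.card_fin]
        omega
      obtain ⟨U0, hU0sub, hU0card⟩ := Finset.exists_subset_card_eq hcc
      set U : ↥(Idx t ℓ) := ⟨U0, Finset.mem_powersetCard_univ.mpr hU0card⟩ with hU
      set a0 : AF t ℓ K := fun _ => x0 with ha0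
      set a1 : AF t ℓ K := Function.update a0 U x1 with ha1
      have hne1 : a0 U ≠ a1 U := by
        rw [ha1, Function.update_self]
        exact hx01
      have hwmem : ∀ u : Fin (t + 2 * ℓ - 4), u ∈ ({w, w'} : Finset (Fin (t + 2 * ℓ - 4))) →
          u ∉ U0 := by
        intro u hu h2
        exact Finset.mem_compl.mp (hU0sub h2) hu
      exact ⟨edg t ℓ K U a0 a1, ⟨U, a0, a1, hne1, rfl⟩,
        mem_edg_inl.mpr (hwmem w (by simp)), mem_edg_inl.mpr (hwmem w' (by simp))⟩
  · -- inl inr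
    have hcc : ℓ - 2 ≤ (({w} : Finset (Fin (t + 2 * ℓ - 4)))ᶜ).card := by
      rw [Finset.card_compl, Finset.card_singleton, Fintype.card_fin]
      omega
    obtain ⟨U0, hU0sub, hU0card⟩ := Finset.exists_subset_card_eq hcc
    set U : ↥(Idx t ℓ) := ⟨U0, Finset.mem_powersetCard_univ.mpr hU0card⟩ with hU
    set a2 : AF t ℓ K := Function.update a' U (if a' U = x0 then x1 else x0) with ha2
    have hne1 : a' U ≠ a2 U := by
      rw [ha2, Function.update_self]
      exact (flipne _).symm
    have hwU : w ∉ U0 := fun h2 => Finset.mem_compl.mp (hU0sub h2) (by simp)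
    exact ⟨edg t ℓ K U a' a2, ⟨U, a', a2, hne1, rfl⟩,
      mem_edg_inl.mpr hwU, mem_edg_inr.mpr (Or.inl rfl)⟩
  · -- inr inl
    have hcc : ℓ - 2 ≤ (({w'} : Finset (Fin (t + 2 * ℓ - 4)))ᶜ).card := by
      rw [Finset.card_compl, Finset.card_singleton, Fintype.card_fin]
      omega
    obtain ⟨U0, hU0sub, hU0card⟩ := Finset.exists_subset_card_eq hcc
    set U : ↥(Idx t ℓ) := ⟨U0, Finset.mem_powersetCard_univ.mpr hU0card⟩ with hU
    set a2 : AF t ℓ K := Function.update a U (if a U = x0 then x1 else x0) with ha2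
    have hne1 : a U ≠ a2 U := by
      rw [ha2, Function.update_self]
      exact (flipne _).symm
    have hwU : w' ∉ U0 := fun h2 => Finset.mem_compl.mp (hU0sub h2) (by simp)
    exact ⟨edg t ℓ K U a a2, ⟨U, a, a2, hne1, rfl⟩,
      mem_edg_inr.mpr (Or.inl rfl), mem_edg_inl.mpr hwU⟩
  · -- inr inr
    have hne' : a ≠ a' := fun h => hne (by rw [h])
    obtain ⟨U, hU⟩ := Function.ne_iff.mp hne'
    exact ⟨edg t ℓ K U a a', ⟨U, a, a', hU, rfl⟩,
      mem_edg_inr.mpr (Or.inl rfl), mem_edg_inr.mpr (Or.inr rfl)⟩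


private lemma chromStrong_le {W : Type} (H : Set (Finset W)) (c k : ℕ) (f : W → ℕ)
    (hf : IsStrongColouring H c f) (hb : ∀ v, f v < k) : chromStrong H c ≤ (k : ℕ∞) :=
  sInf_le ⟨k, rfl, f, hf, hb⟩

private lemma HC_chrom (ht : 0 < t) (hl : 2 ≤ ℓ) (hK : 2 ≤ K) :
    chromStrong (HC t ℓ K) (t + ℓ) =
      ((K ^ ((t + 2 * ℓ - 4).choose (ℓ - 2)) + t + 2 * ℓ - 4 : ℕ) : ℕ∞) := by
  have hcard : Fintype.card (VT t ℓ K) =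
      K ^ ((t + 2 * ℓ - 4).choose (ℓ - 2)) + t + 2 * ℓ - 4 := by
    rw [card_VT]
    omega
  apply le_antisymm
  · rw [← hcard]
    apply chromStrong_le
    · intro e _
      have hinj : Function.Injective (fun v : VT t ℓ K => ((Fintype.equivFin (VT t ℓ K)) v).val) :=
        fun x y hxy => (Fintype.equivFin _).injective (Fin.val_injective hxy)
      rw [Finset.card_image_of_injective _ hinj]
      exact min_le_right _ _
    · exact fun v => ((Fintype.equivFin (VT t ℓ K)) v).isLt
  · apply le_sInf
    rintro x ⟨k, rfl, f, hf, hfk⟩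
    rw [Nat.cast_le, ← hcard]
    have hinj : Function.Injective f := by
      intro v v' hveq
      by_contra hne
      obtain ⟨e, he, hv, hv'⟩ := exists_edge ht hl hK hne
      obtain ⟨U, a, a', hUa, rfl⟩ := he
      have hecard : (edg t ℓ K U a a').card = t + ℓ :=
        card_edg hl (fun h => hUa (by rw [h]))
      have h1 := hf _ (⟨U, a, a', hUa, rfl⟩ : _ ∈ HC t ℓ K)
      rw [hecard, min_self] at h1
      have himg : ((edg t ℓ K U a a').image f).card = (edg t ℓ K U a a').card :=
        le_antisymm Finset.card_image_le (by rw [hecard]; exact h1)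
      have h2 : Set.InjOn f ↑(edg t ℓ K U a a') := Finset.injOn_of_card_image_eq himg
      exact hne (h2 (Finset.mem_coe.mpr hv) (Finset.mem_coe.mpr hv') hveq)
    have := Fintype.card_le_of_injective (fun v => (⟨f v, hfk v⟩ : Fin k))
      (fun x y h => hinj (by simpa using congrArg Fin.val h))
    simpa using this


private lemma res_mem {X p : Finset (Fin (t + 2 * ℓ - 4))}
    (hp : p ∈ X.powersetCard (ℓ - 2)) : p ∈ Idx t ℓ :=
  Finset.mem_powersetCard_univ.mpr (Finset.mem_powersetCard.mp hp).2

variable (t ℓ K) in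
private def res (X : Finset (Fin (t + 2 * ℓ - 4))) (b : AF t ℓ K) :
    ↥(X.powersetCard (ℓ - 2)) → Fin K :=
  fun p => b ⟨p.1, res_mem p.2⟩

private lemma HC_link_le (ht : 0 < t) (hl : 2 ≤ ℓ) (hK : 2 ≤ K)
    (S : Finset (VT t ℓ K)) (hS : S.card = t) :
    chromStrong (link (HC t ℓ K) S) ℓ ≤
      ((K ^ ((2 * ℓ - 4).choose (ℓ - 2)) + 2 * ℓ - 4 : ℕ) : ℕ∞) := by
  classical
  have hb' : 0 < (2 * ℓ - 4).choose (ℓ - 2) := Nat.choose_pos (by omega)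
  have hKp : 2 ≤ K ^ ((2 * ℓ - 4).choose (ℓ - 2)) :=
    le_trans hK (Nat.le_self_pow hb'.ne' K)
  have strong_of_inj : ∀ f : VT t ℓ K → ℕ,
      (∀ e' ∈ link (HC t ℓ K) S, Set.InjOn f ↑e') →
      IsStrongColouring (link (HC t ℓ K) S) ℓ f := by
    intro f hf e' he'
    rw [Finset.card_image_of_injOn (hf e' he')]
    exact min_le_right _ _
  set SW : Finset (Fin (t + 2 * ℓ - 4)) := Finset.univ.filter (fun w => Sum.inl w ∈ S) with hSW
  set SA : Finset (AF t ℓ K) := Finset.univ.filter (fun b => Sum.inr b ∈ S) with hSA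
  have hmem_SW : ∀ w, w ∈ SW ↔ Sum.inl w ∈ S := by intro w; simp [hSW]
  have hmem_SA : ∀ b, b ∈ SA ↔ Sum.inr b ∈ S := by intro b; simp [hSA]
  have hcards : SW.card + SA.card = t := by
    have hrepr : S = SW.image Sum.inl ∪ SA.image Sum.inr := by
      ext x
      rcases x with w | b <;> simp [hSW, hSA]
    have hdisj : Disjoint (SW.image Sum.inl) (SA.image Sum.inr) := by
      rw [Finset.disjoint_left]
      rintro x hx1 hx2
      obtain ⟨u, _, rfl⟩ := Finset.mem_image.mp hx1
      obtain ⟨u2, _, h⟩ := Finset.mem_image.mp hx2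
      exact absurd h (by simp)
    have h2 := hS
    rw [hrepr, Finset.card_union_of_disjoint hdisj,
      Finset.card_image_of_injective _ Sum.inl_injective,
      Finset.card_image_of_injective _ Sum.inr_injective] at h2
    exact h2
  -- membership facts used in all cases
  have hSW_not : ∀ (e : Finset (VT t ℓ K)), S ⊆ e →
      ∀ w : Fin (t + 2 * ℓ - 4), Sum.inl w ∈ e \ S → w ∈ SWᶜ := by
    intro e _ w hw
    rw [Finset.mem_compl]
    intro h
    exact (Finset.mem_sdiff.mp hw).2 ((hmem_SW w).mp h)
  rcases (show SA.card = 0 ∨ SA.card = 1 ∨ SA.card = 2 ∨ 3 ≤ SA.card by omega) with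
    hSA0 | hSA1 | hSA2 | hSA3
  · -- S contains no inr vertex
    have hSWcard : SW.card = t := by omega
    set X := SWᶜ with hX
    have hXcard : X.card = 2 * ℓ - 4 := by
      rw [hX, Finset.card_compl, Fintype.card_fin, hSWcard]; omega
    have hTPcard : Fintype.card (↥(X.powersetCard (ℓ - 2)) → Fin K) =
        K ^ ((2 * ℓ - 4).choose (ℓ - 2)) := by
      rw [Fintype.card_fun, Fintype.card_coe, Finset.card_powersetCard, hXcard,
        Fintype.card_fin]
    set f : VT t ℓ K → ℕ :=
      Sum.elim (rk X) (fun b => 2 * ℓ - 4 + (Fintype.equivFin (↥(X.powersetCard (ℓ - 2)) → Fin K) (res t ℓ K X b)).val) with hfdef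
    refine le_trans (chromStrong_le _ ℓ (K ^ ((2 * ℓ - 4).choose (ℓ - 2)) + (2 * ℓ - 4)) f
      ?_ ?_) (Nat.cast_le.mpr (by omega))
    · apply strong_of_inj
      rintro e' ⟨e, ⟨U, a, a', hUa, rfl⟩, hSe, rfl⟩
      have hUX : (U : Finset (Fin (t + 2 * ℓ - 4))) ⊆ X := by
        intro u hu
        rw [hX, Finset.mem_compl]
        intro huSW
        exact (mem_edg_inl.mp (hSe ((hmem_SW u).mp huSW))) hu
      have hUP : (U : Finset (Fin (t + 2 * ℓ - 4))) ∈ X.powersetCard (ℓ - 2) :=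
        Finset.mem_powersetCard.mpr ⟨hUX, card_U U⟩
      intro x hx y hy hfxy
      rw [Finset.mem_coe] at hx hy
      rcases x with w | b <;> rcases y with w' | b'
      · have hwX := hSW_not _ hSe w hx
        have hw'X := hSW_not _ hSe w' hy
        simp only [hfdef, Sum.elim_inl] at hfxy
        exact congrArg Sum.inl (rk_injOn X (Finset.mem_coe.mpr hwX) (Finset.mem_coe.mpr hw'X) hfxy)
      · exfalso
        have hwX := hSW_not _ hSe w hx
        have h1 : rk X w < 2 * ℓ - 4 := hXcard ▸ rk_lt hwX
        simp only [hfdef, Sum.elim_inl, Sum.elim_inr] at hfxy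
        omega
      · exfalso
        have hwX := hSW_not _ hSe w' hy
        have h1 : rk X w' < 2 * ℓ - 4 := hXcard ▸ rk_lt hwX
        simp only [hfdef, Sum.elim_inl, Sum.elim_inr] at hfxy
        omega
      · have hbmem : b = a ∨ b = a' := mem_edg_inr.mp (Finset.mem_sdiff.mp hx).1
        have hb'mem : b' = a ∨ b' = a' := mem_edg_inr.mp (Finset.mem_sdiff.mp hy).1
        simp only [hfdef, Sum.elim_inr] at hfxy
        have hval : (Fintype.equivFin (↥(X.powersetCard (ℓ - 2)) → Fin K) (res t ℓ K X b)) =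
            (Fintype.equivFin (↥(X.powersetCard (ℓ - 2)) → Fin K) (res t ℓ K X b')) := Fin.val_injective (by omega)
        have hres : res t ℓ K X b = res t ℓ K X b' := (Fintype.equivFin (↥(X.powersetCard (ℓ - 2)) → Fin K)).injective hval
        have heval : b U = b' U := congrFun hres ⟨(U : Finset (Fin (t + 2 * ℓ - 4))), hUP⟩
        by_contra hbb'
        have hbne : b ≠ b' := fun h => hbb' (by rw [h])
        rcases hbmem with rfl | rfl <;> rcases hb'mem with rfl | rfl
        · exact hbne rfl
        · exact hUa heval
        · exact hUa heval.symm
        · exact hbne rfl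
    · intro v
      rcases v with w | b
      · simp only [hfdef, Sum.elim_inl]
        by_cases hw : w ∈ X
        · have := rk_lt hw
          omega
        · rw [rk, dif_neg hw]
          omega
      · simp only [hfdef, Sum.elim_inr]
        have h3 := lt_of_lt_of_le (Fintype.equivFin (↥(X.powersetCard (ℓ - 2)) → Fin K)
          (res t ℓ K X b)).isLt hTPcard.le
        omega
  · -- exactly one inr vertex in S
    obtain ⟨a0, hSAeq⟩ := Finset.card_eq_one.mp hSA1
    have hSWcard : SW.card = t - 1 := by omega
    set X := SWᶜ with hX
    have hXcard : X.card = 2 * ℓ - 3 := by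
      rw [hX, Finset.card_compl, Fintype.card_fin, hSWcard]; omega
    set f : VT t ℓ K → ℕ := Sum.elim (rk X) (fun _ => 2 * ℓ - 3) with hfdef
    refine le_trans (chromStrong_le _ ℓ (2 * ℓ - 2) f ?_ ?_) (Nat.cast_le.mpr (by omega))
    · apply strong_of_inj
      rintro e' ⟨e, ⟨U, a, a', hUa, rfl⟩, hSe, rfl⟩
      have ha0 : a0 = a ∨ a0 = a' :=
        mem_edg_inr.mp (hSe ((hmem_SA a0).mp (hSAeq ▸ Finset.mem_singleton_self a0)))
      intro x hx y hy hfxy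
      rw [Finset.mem_coe] at hx hy
      rcases x with w | b <;> rcases y with w' | b'
      · have hwX := hSW_not _ hSe w hx
        have hw'X := hSW_not _ hSe w' hy
        simp only [hfdef, Sum.elim_inl] at hfxy
        exact congrArg Sum.inl (rk_injOn X (Finset.mem_coe.mpr hwX) (Finset.mem_coe.mpr hw'X) hfxy)
      · exfalso
        have hwX := hSW_not _ hSe w hx
        have h1 : rk X w < 2 * ℓ - 3 := hXcard ▸ rk_lt hwX
        simp only [hfdef, Sum.elim_inl, Sum.elim_inr] at hfxy
        omega
      · exfalso
        have hwX := hSW_not _ hSe w' hy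
        have h1 : rk X w' < 2 * ℓ - 3 := hXcard ▸ rk_lt hwX
        simp only [hfdef, Sum.elim_inl, Sum.elim_inr] at hfxy
        omega
      · have hbmem : b = a ∨ b = a' := mem_edg_inr.mp (Finset.mem_sdiff.mp hx).1
        have hb'mem : b' = a ∨ b' = a' := mem_edg_inr.mp (Finset.mem_sdiff.mp hy).1
        have ha0S : Sum.inr a0 ∈ S := (hmem_SA a0).mp (hSAeq ▸ Finset.mem_singleton_self a0)
        have hb : b ≠ a0 := fun h => (Finset.mem_sdiff.mp hx).2 (h ▸ ha0S)
        have hb2 : b' ≠ a0 := fun h => (Finset.mem_sdiff.mp hy).2 (h ▸ ha0S)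
        rcases ha0 with rfl | rfl
        · rcases hbmem with rfl | rfl
          · exact absurd rfl hb
          · rcases hb'mem with rfl | rfl
            · exact absurd rfl hb2
            · rfl
        · rcases hbmem with rfl | rfl
          · rcases hb'mem with rfl | rfl
            · rfl
            · exact absurd rfl hb2
          · exact absurd rfl hb
    · intro v
      rcases v with w | b
      · simp only [hfdef, Sum.elim_inl]
        by_cases hw : w ∈ X
        · have := rk_lt hw
          omega
        · rw [rk, dif_neg hw]
          omega
      · simp only [hfdef, Sum.elim_inr]
        omega
  · -- exactly two inr vertices in S
    obtain ⟨b0, b1, hb01, hSAeq⟩ := Finset.card_eq_two.mp hSA2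
    have hSWcard : SW.card = t - 2 := by omega
    set X := SWᶜ with hX
    have hXcard : X.card = 2 * ℓ - 2 := by
      rw [hX, Finset.card_compl, Fintype.card_fin, hSWcard]; omega
    set f : VT t ℓ K → ℕ := Sum.elim (rk X) (fun _ => 0) with hfdef
    refine le_trans (chromStrong_le _ ℓ (2 * ℓ - 2) f ?_ ?_) (Nat.cast_le.mpr (by omega))
    · apply strong_of_inj
      rintro e' ⟨e, ⟨U, a, a', hUa, rfl⟩, hSe, rfl⟩
      have hno : ∀ b : AF t ℓ K, Sum.inr b ∈ edg t ℓ K U a a' \ S → False := by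
        intro b hbm
        rw [Finset.mem_sdiff] at hbm
        have hb := mem_edg_inr.mp hbm.1
        have hb0S : Sum.inr b0 ∈ S := (hmem_SA b0).mp (hSAeq ▸ by simp)
        have hb1S : Sum.inr b1 ∈ S := (hmem_SA b1).mp (hSAeq ▸ by simp)
        have h0 : b0 = a ∨ b0 = a' := mem_edg_inr.mp (hSe hb0S)
        have h1 : b1 = a ∨ b1 = a' := mem_edg_inr.mp (hSe hb1S)
        have hbb0 : b ≠ b0 := fun h => hbm.2 (h ▸ hb0S)
        have hbb1 : b ≠ b1 := fun h => hbm.2 (h ▸ hb1S)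
        rcases hb with rfl | rfl <;> rcases h0 with rfl | rfl <;> rcases h1 with rfl | rfl <;>
          first
            | exact hbb0 rfl
            | exact hbb1 rfl
            | exact hb01 rfl
      intro x hx y hy hfxy
      rw [Finset.mem_coe] at hx hy
      rcases x with w | b <;> rcases y with w' | b'
      · have hwX := hSW_not _ hSe w hx
        have hw'X := hSW_not _ hSe w' hy
        simp only [hfdef, Sum.elim_inl] at hfxy
        exact congrArg Sum.inl (rk_injOn X (Finset.mem_coe.mpr hwX) (Finset.mem_coe.mpr hw'X) hfxy)
      · exact absurd hy (fun h => hno b' h)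
      · exact absurd hx (fun h => hno b h)
      · exact absurd hx (fun h => hno b h)
    · intro v
      rcases v with w | b
      · simp only [hfdef, Sum.elim_inl]
        by_cases hw : w ∈ X
        · have := rk_lt hw
          omega
        · rw [rk, dif_neg hw]
          omega
      · simp only [hfdef, Sum.elim_inr]
        omega
  · -- at least three inr vertices: the link is empty
    refine le_trans (chromStrong_le _ ℓ 1 (fun _ => 0) ?_ (fun _ => Nat.zero_lt_one))
      (Nat.cast_le.mpr (by omega))
    rintro e' ⟨e, ⟨U, a, a', hUa, rfl⟩, hSe, rfl⟩
    exfalso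
    have hsub : SA ⊆ {a, a'} := by
      intro b hb
      have := mem_edg_inr.mp (hSe ((hmem_SA b).mp hb))
      rcases this with rfl | rfl
      · exact Finset.mem_insert_self _ _
      · exact Finset.mem_insert_of_mem (Finset.mem_singleton_self _)
    have h1 := Finset.card_le_card hsub
    have h2 : ({a, a'} : Finset (AF t ℓ K)).card ≤ 2 :=
      le_trans (Finset.card_insert_le _ _) (by simp)
    omega

end Construction

theorem stmt14 (t ℓ K : ℕ) (ht : 0 < t) (hl : 2 ≤ ℓ) (hK : 2 ≤ K) :
    ∃ (V : Type) (_ : DecidableEq V) (H : Set (Finset V)),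
      IsIntersecting H t ∧
      chromStrong H (t + ℓ) =
        ((K ^ ((t + 2 * ℓ - 4).choose (ℓ - 2)) + t + 2 * ℓ - 4 : ℕ) : ℕ∞) ∧
      chromLink H t ℓ ≤ ((K ^ ((2 * ℓ - 4).choose (ℓ - 2)) + 2 * ℓ - 4 : ℕ) : ℕ∞) := by

  refine ⟨VT t ℓ K, inferInstance, HC t ℓ K, HC_intersecting hl, HC_chrom ht hl hK, ?_⟩
  have hb' : 0 < (2 * ℓ - 4).choose (ℓ - 2) := Nat.choose_pos (by omega)
  have hKp : 2 ≤ K ^ ((2 * ℓ - 4).choose (ℓ - 2)) :=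
    le_trans hK (Nat.le_self_pow hb'.ne' K)
  rw [chromLink]
  apply max_le
  · rw [show (1 : ℕ∞) = ((1 : ℕ) : ℕ∞) from by simp]
    exact Nat.cast_le.mpr (by omega)
  · exact iSup₂_le fun S hS => HC_link_le ht hl hK S hS

end HypergraphColouring
end
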